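/- For all real α, γ > 0 with α + γ > d and α = d (or γ = d), there exists C < ∞ such that for all nonzero k ∈ ℤ^d, the sum over nonzero l, m ∈ ℤ^d with l + m = k of 1/(|m|^α |l|^γ) is at most C (1+|k|)^{-β} log(1+|k|), where β = min{α, γ, α+γ−d}. -/

import Mathlib

/-!
Since `|l| + |k - l| ≥ |k|`, in every summand one of `l`, `k - l` has norm at least `|k| / 2`,
and the substitution `l ↦ k - l` (exchanging `α` and `γ`) reduces the sum to the summands with
`|l| ≤ |k - l|`. For those with `|l| ≤ |k|` the factor `|k - l|^(-α)` is at most `2^α |k|^(-α)`,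
and `∑_{0 < |l| ≤ |k|} |l|^(-γ) ≲ |k|^max(d - γ, 0) log |k|`, the logarithm being the harmonic sum
met at `γ = d`; those with `|l| > |k|` are at most `|l|^(-(α + γ))`, whose tail sum is
`≲ |k|^(d - α - γ)`. Both lattice sums are reduced to one-dimensional sums by grouping the points
into sup-norm shells, the `n`-th of which has `O(n^(d - 1))` points.
-/

open Real

/-- Euclidean norm of a lattice point in `ℤ^d`. -/
noncomputable def latticeNorm {d : ℕ} (k : Fin d → ℤ) : ℝ :=
  Real.sqrt (∑ i, ((k i : ℝ)) ^ 2)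

open Finset

variable {d : ℕ}

lemma latticeNorm_eq_norm (l : Fin d → ℤ) :
    latticeNorm l = ‖(WithLp.toLp 2 fun i => (l i : ℝ) : EuclideanSpace ℝ (Fin d))‖ := by
  simp [latticeNorm, EuclideanSpace.norm_eq, sq_abs]

lemma latticeNorm_nonneg (l : Fin d → ℤ) : 0 ≤ latticeNorm l := Real.sqrt_nonneg _

lemma latticeNorm_add_le (l m : Fin d → ℤ) :
    latticeNorm (l + m) ≤ latticeNorm l + latticeNorm m := by
  have hadd : (WithLp.toLp 2 fun i => ((l + m) i : ℝ) : EuclideanSpace ℝ (Fin d)) =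
      WithLp.toLp 2 (fun i => (l i : ℝ)) + WithLp.toLp 2 (fun i => (m i : ℝ)) := by
    rw [← WithLp.toLp_add]
    congr 1
    ext i
    simp
  rw [latticeNorm_eq_norm, latticeNorm_eq_norm, latticeNorm_eq_norm, hadd]
  exact norm_add_le _ _

def latticeSupNorm (l : Fin d → ℤ) : ℕ := univ.sup fun i => (l i).natAbs

lemma natAbs_le_latticeSupNorm (l : Fin d → ℤ) (i : Fin d) : (l i).natAbs ≤ latticeSupNorm l :=
  le_sup (f := fun j => (l j).natAbs) (mem_univ i)

lemma abs_le_latticeSupNorm (l : Fin d → ℤ) (i : Fin d) : |(l i : ℝ)| ≤ latticeSupNorm l := by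
  rw [← Int.cast_abs, ← Nat.cast_natAbs]
  exact_mod_cast natAbs_le_latticeSupNorm l i

lemma abs_le_latticeNorm (l : Fin d → ℤ) (i : Fin d) : |(l i : ℝ)| ≤ latticeNorm l := by
  rw [latticeNorm_eq_norm]
  simpa using
    PiLp.norm_apply_le (WithLp.toLp 2 fun i => (l i : ℝ) : EuclideanSpace ℝ (Fin d)) i

lemma latticeSupNorm_le_latticeNorm (l : Fin d → ℤ) : (latticeSupNorm l : ℝ) ≤ latticeNorm l := by
  have : latticeSupNorm l ≤ ⌊latticeNorm l⌋₊ :=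
    Finset.sup_le fun i _ => Nat.le_floor <| by simpa [Nat.cast_natAbs] using abs_le_latticeNorm l i
  exact (Nat.cast_le.mpr this).trans (Nat.floor_le (Real.sqrt_nonneg _))

lemma latticeNorm_le_sqrt_mul_latticeSupNorm (l : Fin d → ℤ) :
    latticeNorm l ≤ √d * latticeSupNorm l := by
  rw [← Real.sqrt_sq (Nat.cast_nonneg (latticeSupNorm l)), ← Real.sqrt_mul (Nat.cast_nonneg d)]
  refine Real.sqrt_le_sqrt ?_
  calc ∑ i, ((l i : ℝ)) ^ 2 ≤ ∑ _i : Fin d, (latticeSupNorm l : ℝ) ^ 2 := by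
        refine sum_le_sum fun i _ => ?_
        rw [← sq_abs]
        exact pow_le_pow_left₀ (abs_nonneg _) (abs_le_latticeSupNorm l i) 2
    _ = d * (latticeSupNorm l : ℝ) ^ 2 := by simp

lemma one_le_latticeSupNorm {l : Fin d → ℤ} (hl : l ≠ 0) : 1 ≤ latticeSupNorm l := by
  obtain ⟨i, hi⟩ := Function.ne_iff.mp hl
  exact (Int.natAbs_pos.mpr hi).trans_le (natAbs_le_latticeSupNorm l i)

lemma one_le_latticeNorm {l : Fin d → ℤ} (hl : l ≠ 0) : 1 ≤ latticeNorm l :=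
  (Nat.one_le_cast.mpr (one_le_latticeSupNorm hl)).trans (latticeSupNorm_le_latticeNorm l)

noncomputable def latticeCube (d n : ℕ) : Finset (Fin d → ℤ) :=
  Fintype.piFinset fun _ => Icc (-(n : ℤ)) n

lemma mem_latticeCube {n : ℕ} {l : Fin d → ℤ} : l ∈ latticeCube d n ↔ latticeSupNorm l ≤ n := by
  simp only [latticeCube, Fintype.mem_piFinset, mem_Icc, latticeSupNorm, Finset.sup_le_iff,
    mem_univ, forall_const]
  exact forall_congr' fun i => by omega

lemma card_latticeCube (d n : ℕ) : #(latticeCube d n) = (2 * n + 1) ^ d := by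
  simp only [latticeCube, Fintype.card_piFinset, Int.card_Icc, prod_const, card_univ,
    Fintype.card_fin]
  congr 1
  omega

lemma card_filter_latticeSupNorm_eq_le (hd : 0 < d) (F : Finset (Fin d → ℤ)) {n : ℕ}
    (hn : 1 ≤ n) :
    (#{l ∈ F | latticeSupNorm l = n} : ℝ) ≤ 2 * d * 3 ^ (d - 1) * (n : ℝ) ^ ((d : ℝ) - 1) := by
  have hsub : {l ∈ F | latticeSupNorm l = n} ⊆ latticeCube d n \ latticeCube d (n - 1) := by
    intro l hl
    simp only [mem_filter] at hl
    simp only [mem_sdiff, mem_latticeCube]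
    omega
  have hcube : latticeCube d (n - 1) ⊆ latticeCube d n := fun l hl => by
    rw [mem_latticeCube] at *
    omega
  have hn' : (1 : ℝ) ≤ n := Nat.one_le_cast.mpr hn
  calc (#{l ∈ F | latticeSupNorm l = n} : ℝ)
      ≤ #(latticeCube d n) - #(latticeCube d (n - 1)) := by
        rw [← Nat.cast_sub (card_le_card hcube), ← card_sdiff_of_subset hcube]
        exact_mod_cast card_le_card hsub
    _ = (2 * n + 1 : ℝ) ^ d - (2 * n - 1) ^ d := by
        rw [card_latticeCube, card_latticeCube]
        push_cast [Nat.cast_sub hn]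
        ring
    _ ≤ |(2 * n + 1 : ℝ) - (2 * n - 1)| * d * max |(2 * n + 1 : ℝ)| |2 * n - 1| ^ (d - 1) :=
        le_of_abs_le (abs_pow_sub_pow_le _ _ _)
    _ ≤ 2 * d * (3 * n) ^ (d - 1) := by
        rw [show (2 * n + 1 : ℝ) - (2 * n - 1) = 2 by ring, abs_two,
          abs_of_pos (by linarith : (0 : ℝ) < 2 * n + 1),
          abs_of_nonneg (by linarith : (0 : ℝ) ≤ 2 * n - 1), max_eq_left (by linarith)]
        gcongr
        linarith
    _ = 2 * d * 3 ^ (d - 1) * (n : ℝ) ^ ((d : ℝ) - 1) := by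
        rw [mul_pow, ← Real.rpow_natCast (n : ℝ), Nat.cast_pred hd]
        ring

lemma sum_ite_ne_zero_le_sum_shells (hd : 0 < d) (F : Finset (Fin d → ℤ)) {g : ℕ → ℝ}
    (hg : ∀ n, 0 ≤ g n) :
    ∑ l ∈ F, (if l ≠ 0 then g (latticeSupNorm l) else 0)
      ≤ 2 * d * 3 ^ (d - 1) *
          ∑ n ∈ Icc 1 (F.sup latticeSupNorm), (n : ℝ) ^ ((d : ℝ) - 1) * g n := by
  have hmaps : ∀ l ∈ {l ∈ F | l ≠ 0}, latticeSupNorm l ∈ Icc 1 (F.sup latticeSupNorm) := by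
    intro l hl
    rw [mem_filter] at hl
    exact mem_Icc.mpr ⟨one_le_latticeSupNorm hl.2, le_sup hl.1⟩
  rw [← sum_filter, ← sum_fiberwise_of_maps_to hmaps, mul_sum]
  refine sum_le_sum fun n hn => ?_
  have hfiber : ∑ l ∈ {l ∈ F | l ≠ 0} with latticeSupNorm l = n, g (latticeSupNorm l)
      = #{l ∈ {l ∈ F | l ≠ 0} | latticeSupNorm l = n} * g n := by
    rw [sum_congr rfl fun l hl => by rw [(mem_filter.mp hl).2], sum_const, nsmul_eq_mul]
  have hcard : (#{l ∈ {l ∈ F | l ≠ 0} | latticeSupNorm l = n} : ℝ)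
      ≤ 2 * d * 3 ^ (d - 1) * (n : ℝ) ^ ((d : ℝ) - 1) :=
    card_filter_latticeSupNorm_eq_le hd _ (mem_Icc.mp hn).1
  rw [hfiber, ← mul_assoc]
  exact mul_le_mul_of_nonneg_right hcard (hg n)

lemma sum_ite_rpow_le_sum_shells (hd : 0 < d) (F : Finset (Fin d → ℤ)) {s : ℝ} (hs : 0 ≤ s)
    (P : (Fin d → ℤ) → Prop) [DecidablePred P] (Q : ℕ → Prop) [DecidablePred Q]
    (hPQ : ∀ l, l ≠ 0 → P l → Q (latticeSupNorm l)) :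
    ∑ l ∈ F, (if l ≠ 0 ∧ P l then latticeNorm l ^ (-s) else 0)
      ≤ 2 * d * 3 ^ (d - 1) *
          ∑ n ∈ Icc 1 (F.sup latticeSupNorm), (if Q n then (n : ℝ) ^ ((d : ℝ) - s - 1) else 0) := by
  set g : ℕ → ℝ := fun n => if Q n then (n : ℝ) ^ (-s) else 0
  have hg : ∀ n, 0 ≤ g n := fun n => by
    simp only [g]
    split_ifs <;> positivity
  have hterm : ∀ l ∈ F, (if l ≠ 0 ∧ P l then latticeNorm l ^ (-s) else 0)
      ≤ if l ≠ 0 then g (latticeSupNorm l) else 0 := by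
    intro l _
    by_cases hl : l ≠ 0 ∧ P l
    · have hpos : (0 : ℝ) < latticeSupNorm l := Nat.cast_pos.mpr (one_le_latticeSupNorm hl.1)
      simp only [g, if_pos hl, if_pos hl.1, if_pos (hPQ l hl.1 hl.2)]
      exact Real.rpow_le_rpow_of_nonpos hpos (latticeSupNorm_le_latticeNorm l) (neg_nonpos.mpr hs)
    · rw [if_neg hl]
      split_ifs
      exacts [hg _, le_rfl]
  have hshell : ∀ n ∈ Icc 1 (F.sup latticeSupNorm), (n : ℝ) ^ ((d : ℝ) - 1) * g n
      = if Q n then (n : ℝ) ^ ((d : ℝ) - s - 1) else 0 := by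
    intro n hn
    have hn0 : (0 : ℝ) < n := Nat.cast_pos.mpr (mem_Icc.mp hn).1
    simp only [g, mul_ite, mul_zero, ← Real.rpow_add hn0]
    ring_nf
  rw [← sum_congr rfl hshell]
  exact (sum_le_sum hterm).trans (sum_ite_ne_zero_le_sum_shells hd F hg)

lemma sum_Ioc_rpow_sub_one_le {e : ℝ} (he : e < 0) {m : ℕ} (hm : 0 < m) (M : ℕ) :
    ∑ n ∈ Ioc m M, (n : ℝ) ^ (e - 1) ≤ (m : ℝ) ^ e / (-e) := by
  rcases le_or_gt M m with hMm | hmM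
  · rw [Ioc_eq_empty_of_le hMm, sum_empty]
    exact div_nonneg (by positivity) (by linarith)
  have hm' : (0 : ℝ) < m := Nat.cast_pos.mpr hm
  have hanti : AntitoneOn (fun x : ℝ => x ^ (e - 1)) (Set.Icc (m : ℝ) M) := fun x hx y _ hxy =>
    Real.rpow_le_rpow_of_nonpos (hm'.trans_le hx.1) hxy (by linarith)
  have hzero : (0 : ℝ) ∉ Set.uIcc (m : ℝ) M := by
    rw [Set.uIcc_of_le (Nat.cast_le.mpr hmM.le), Set.mem_Icc]
    exact fun h => hm'.not_ge h.1
  calc ∑ n ∈ Ioc m M, (n : ℝ) ^ (e - 1)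
      = ∑ i ∈ Ico m M, ((i + 1 : ℕ) : ℝ) ^ (e - 1) := by
        rw [← Ico_add_one_add_one_eq_Ioc, ← sum_Ico_add']
    _ ≤ ∫ x in (m : ℝ)..M, x ^ (e - 1) := hanti.sum_le_integral_Ico hmM.le
    _ = ((m : ℝ) ^ e - (M : ℝ) ^ e) / (-e) := by
        rw [integral_rpow (Or.inr ⟨by linarith, hzero⟩), sub_add_cancel, ← neg_sub,
          neg_div, div_neg]
    _ ≤ (m : ℝ) ^ e / (-e) :=
        div_le_div_of_nonneg_right (sub_le_self _ (by positivity)) (by linarith)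

lemma sum_ite_le_rpow_sub_one_le {e : ℝ} (he : e < 0) {A : ℝ} (hA : 0 < A) (M : ℕ) :
    ∑ n ∈ Icc 1 M, (if A ≤ n then (n : ℝ) ^ (e - 1) else 0) ≤ (1 - 1 / e) * A ^ e := by
  set m := ⌈A⌉₊
  have hm : 0 < m := Nat.ceil_pos.mpr hA
  have hm1 : (1 : ℝ) ≤ m := Nat.one_le_cast.mpr hm
  have hsub : (Icc 1 M).filter (fun n : ℕ => A ≤ n) ⊆ insert m (Ioc m M) := by
    intro n hn
    simp only [mem_filter, mem_Icc] at hn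
    simp only [mem_insert, mem_Ioc]
    have := Nat.ceil_le.mpr hn.2
    omega
  calc ∑ n ∈ Icc 1 M, (if A ≤ n then (n : ℝ) ^ (e - 1) else 0)
      ≤ ∑ n ∈ insert m (Ioc m M), (n : ℝ) ^ (e - 1) := by
        rw [← sum_filter]
        exact sum_le_sum_of_subset_of_nonneg hsub fun n _ _ => by positivity
    _ = (m : ℝ) ^ (e - 1) + ∑ n ∈ Ioc m M, (n : ℝ) ^ (e - 1) :=
        sum_insert (by simp)
    _ ≤ (m : ℝ) ^ e + (m : ℝ) ^ e / (-e) :=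
        add_le_add (Real.rpow_le_rpow_of_exponent_le hm1 (by linarith))
          (sum_Ioc_rpow_sub_one_le he hm M)
    _ = (1 - 1 / e) * (m : ℝ) ^ e := by
        field_simp
        ring
    _ ≤ (1 - 1 / e) * A ^ e := by
        have : 1 / e < 0 := one_div_neg.mpr he
        exact mul_le_mul_of_nonneg_left (Real.rpow_le_rpow_of_nonpos hA (Nat.le_ceil A) he.le)
          (by linarith)

lemma sum_ite_le_inv_le {N : ℝ} (hN : 1 ≤ N) (M : ℕ) :
    ∑ n ∈ Icc 1 M, (if n ≤ N then (n : ℝ)⁻¹ else 0) ≤ 1 + log N := by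
  have hsub : (Icc 1 M).filter (fun n : ℕ => n ≤ N) ⊆ Icc 1 ⌊N⌋₊ := by
    intro n hn
    simp only [mem_filter, mem_Icc] at hn ⊢
    exact ⟨hn.1.1, Nat.le_floor hn.2⟩
  calc ∑ n ∈ Icc 1 M, (if n ≤ N then (n : ℝ)⁻¹ else 0)
      ≤ ∑ n ∈ Icc 1 ⌊N⌋₊, (n : ℝ)⁻¹ := by
        rw [← sum_filter]
        exact sum_le_sum_of_subset_of_nonneg hsub fun n _ _ => by positivity
    _ = harmonic ⌊N⌋₊ := by simp [harmonic_eq_sum_Icc]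
    _ ≤ 1 + log ⌊N⌋₊ := harmonic_le_one_add_log _
    _ ≤ 1 + log N := by
        gcongr
        · exact Nat.cast_pos.mpr (Nat.floor_pos.mpr hN)
        · exact Nat.floor_le (by linarith)

lemma exists_sum_ite_le_rpow_sub_one_le (e : ℝ) :
    ∃ C, 0 < C ∧ ∀ N : ℝ, 1 ≤ N → ∀ M : ℕ,
      ∑ n ∈ Icc 1 M, (if n ≤ N then (n : ℝ) ^ (e - 1) else 0) ≤ C * N ^ max e 0 * (1 + log N) := by
  rcases le_or_gt 0 e with he | he
  · refine ⟨1, one_pos, fun N hN M => ?_⟩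
    have hterm : ∀ n ∈ Icc 1 M, (if n ≤ N then (n : ℝ) ^ (e - 1) else 0)
        ≤ N ^ e * (if n ≤ N then (n : ℝ)⁻¹ else 0) := by
      intro n hn
      have hn0 : (0 : ℝ) < n := Nat.cast_pos.mpr (mem_Icc.mp hn).1
      split_ifs with hnN
      · rw [Real.rpow_sub_one hn0.ne', div_eq_mul_inv]
        exact mul_le_mul_of_nonneg_right (Real.rpow_le_rpow hn0.le hnN he) (by positivity)
      · simp
    calc ∑ n ∈ Icc 1 M, (if n ≤ N then (n : ℝ) ^ (e - 1) else 0)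
        ≤ N ^ e * ∑ n ∈ Icc 1 M, (if n ≤ N then (n : ℝ)⁻¹ else 0) := by
          rw [mul_sum]
          exact sum_le_sum hterm
      _ ≤ N ^ e * (1 + log N) := by
          gcongr
          exact sum_ite_le_inv_le hN M
      _ = 1 * N ^ max e 0 * (1 + log N) := by rw [max_eq_left he, one_mul]
  · have hC : 0 < 1 - 1 / e := by
      have := one_div_neg.mpr he
      linarith
    refine ⟨1 - 1 / e, hC, fun N hN M => ?_⟩
    have hterm : ∀ n ∈ Icc 1 M, (if n ≤ N then (n : ℝ) ^ (e - 1) else 0)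
        ≤ (if 1 ≤ (n : ℝ) then (n : ℝ) ^ (e - 1) else 0) := by
      intro n hn
      rw [if_pos (Nat.one_le_cast.mpr (mem_Icc.mp hn).1)]
      split_ifs
      · exact le_rfl
      · positivity
    calc ∑ n ∈ Icc 1 M, (if n ≤ N then (n : ℝ) ^ (e - 1) else 0)
        ≤ (1 - 1 / e) * 1 ^ e :=
          (sum_le_sum hterm).trans (sum_ite_le_rpow_sub_one_le he one_pos M)
      _ ≤ (1 - 1 / e) * N ^ max e 0 * (1 + log N) := by
          rw [max_eq_right he.le, Real.rpow_zero, Real.one_rpow, mul_one]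
          exact le_mul_of_one_le_right hC.le (by linarith [Real.log_nonneg hN])

lemma exists_sum_latticeNorm_rpow_le (hd : 0 < d) {s : ℝ} (hs : 0 ≤ s) :
    ∃ C, 0 < C ∧ ∀ N : ℝ, 1 ≤ N → ∀ F : Finset (Fin d → ℤ),
      ∑ l ∈ F, (if l ≠ 0 ∧ latticeNorm l ≤ N then latticeNorm l ^ (-s) else 0)
        ≤ C * N ^ max ((d : ℝ) - s) 0 * (1 + log N) := by
  obtain ⟨C, hC, hsum⟩ := exists_sum_ite_le_rpow_sub_one_le ((d : ℝ) - s)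
  refine ⟨2 * d * 3 ^ (d - 1) * C, by positivity, fun N hN F => ?_⟩
  calc ∑ l ∈ F, (if l ≠ 0 ∧ latticeNorm l ≤ N then latticeNorm l ^ (-s) else 0)
      ≤ 2 * d * 3 ^ (d - 1) *
          ∑ n ∈ Icc 1 (F.sup latticeSupNorm), (if n ≤ N then (n : ℝ) ^ ((d : ℝ) - s - 1) else 0) :=
        sum_ite_rpow_le_sum_shells hd F hs _ (fun n : ℕ => (n : ℝ) ≤ N)
          fun l _ hl => (latticeSupNorm_le_latticeNorm l).trans hl
    _ ≤ 2 * d * 3 ^ (d - 1) * (C * N ^ max ((d : ℝ) - s) 0 * (1 + log N)) := by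
        gcongr
        exact hsum N hN _
    _ = _ := by ring

lemma exists_sum_latticeNorm_rpow_gt_le (hd : 0 < d) {s : ℝ} (hds : d < s) :
    ∃ C, 0 < C ∧ ∀ N : ℝ, 0 < N → ∀ F : Finset (Fin d → ℤ),
      ∑ l ∈ F, (if l ≠ 0 ∧ N < latticeNorm l then latticeNorm l ^ (-s) else 0)
        ≤ C * N ^ ((d : ℝ) - s) := by
  have he : (d : ℝ) - s < 0 := by linarith
  have hsqrt : 0 < √(d : ℝ) := Real.sqrt_pos.mpr (Nat.cast_pos.mpr hd)
  have hC : 0 < 1 - 1 / ((d : ℝ) - s) := by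
    have := one_div_neg.mpr he
    linarith
  refine ⟨2 * d * 3 ^ (d - 1) * (1 - 1 / ((d : ℝ) - s)) / √(d : ℝ) ^ ((d : ℝ) - s),
    by positivity, fun N hN F => ?_⟩
  have hPQ : ∀ l : Fin d → ℤ, l ≠ 0 → N < latticeNorm l → N / √(d : ℝ) ≤ latticeSupNorm l := by
    intro l _ hl
    rw [div_le_iff₀ hsqrt, mul_comm]
    exact hl.le.trans (latticeNorm_le_sqrt_mul_latticeSupNorm l)
  calc ∑ l ∈ F, (if l ≠ 0 ∧ N < latticeNorm l then latticeNorm l ^ (-s) else 0)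
      ≤ 2 * d * 3 ^ (d - 1) * ∑ n ∈ Icc 1 (F.sup latticeSupNorm),
          (if N / √(d : ℝ) ≤ n then (n : ℝ) ^ ((d : ℝ) - s - 1) else 0) :=
        sum_ite_rpow_le_sum_shells hd F ((Nat.cast_nonneg d).trans hds.le) _ _ hPQ
    _ ≤ 2 * d * 3 ^ (d - 1) * ((1 - 1 / ((d : ℝ) - s)) * (N / √(d : ℝ)) ^ ((d : ℝ) - s)) := by
        gcongr
        exact sum_ite_le_rpow_sub_one_le he (div_pos hN hsqrt) _
    _ = _ := by
        rw [Real.div_rpow hN.le hsqrt.le]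
        ring

noncomputable def halfSummand (α γ : ℝ) (k l : Fin d → ℤ) : ℝ :=
  if l ≠ 0 ∧ latticeNorm l ≤ latticeNorm (k - l) then
    latticeNorm (k - l) ^ (-α) * latticeNorm l ^ (-γ)
  else 0

lemma halfSummand_nonneg (α γ : ℝ) (k l : Fin d → ℤ) : 0 ≤ halfSummand α γ k l :=
  ite_nonneg (mul_nonneg (Real.rpow_nonneg (latticeNorm_nonneg _) _)
    (Real.rpow_nonneg (latticeNorm_nonneg _) _)) le_rfl

lemma ite_one_div_le_halfSummand_add (α γ : ℝ) (k l : Fin d → ℤ) :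
    (if l ≠ 0 ∧ k - l ≠ 0 then 1 / (latticeNorm (k - l) ^ α * latticeNorm l ^ γ) else 0)
      ≤ halfSummand α γ k l + halfSummand γ α k (k - l) := by
  have h₁ := halfSummand_nonneg α γ k l
  have h₂ := halfSummand_nonneg γ α k (k - l)
  split_ifs with hl
  swap
  · positivity
  have hsummand : 1 / (latticeNorm (k - l) ^ α * latticeNorm l ^ γ)
      = latticeNorm (k - l) ^ (-α) * latticeNorm l ^ (-γ) := by
    rw [Real.rpow_neg (latticeNorm_nonneg _), Real.rpow_neg (latticeNorm_nonneg _), one_div,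
      mul_inv]
  rcases le_total (latticeNorm l) (latticeNorm (k - l)) with hle | hle
  · have : halfSummand α γ k l = latticeNorm (k - l) ^ (-α) * latticeNorm l ^ (-γ) := by
      rw [halfSummand, if_pos ⟨hl.1, hle⟩]
    linarith
  · have : halfSummand γ α k (k - l) = latticeNorm l ^ (-γ) * latticeNorm (k - l) ^ (-α) := by
      rw [halfSummand, sub_sub_cancel, if_pos ⟨hl.2, hle⟩]
    rw [hsummand, mul_comm]
    linarith

lemma halfSummand_le {α : ℝ} (hα : 0 ≤ α) (γ : ℝ) {k : Fin d → ℤ} (hk : k ≠ 0)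
    (l : Fin d → ℤ) :
    halfSummand α γ k l
      ≤ 2 ^ α * latticeNorm k ^ (-α) *
          (if l ≠ 0 ∧ latticeNorm l ≤ latticeNorm k then latticeNorm l ^ (-γ) else 0)
        + (if l ≠ 0 ∧ latticeNorm k < latticeNorm l then latticeNorm l ^ (-(α + γ)) else 0) := by
  have hN : 0 < latticeNorm k := one_pos.trans_le (one_le_latticeNorm hk)
  have hP := ite_nonneg (p := l ≠ 0 ∧ latticeNorm l ≤ latticeNorm k)
    (Real.rpow_nonneg (latticeNorm_nonneg l) (-γ)) le_rfl
  have hQ := ite_nonneg (p := l ≠ 0 ∧ latticeNorm k < latticeNorm l)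
    (Real.rpow_nonneg (latticeNorm_nonneg l) (-(α + γ))) le_rfl
  rw [halfSummand]
  by_cases hl : l ≠ 0 ∧ latticeNorm l ≤ latticeNorm (k - l)
  swap
  · rw [if_neg hl]
    positivity
  rw [if_pos hl]
  rcases le_or_gt (latticeNorm l) (latticeNorm k) with hlN | hlN
  · have hm : latticeNorm k / 2 ≤ latticeNorm (k - l) := by
      have := latticeNorm_add_le l (k - l)
      rw [add_sub_cancel] at this
      linarith [hl.2]
    have hpow : latticeNorm k ^ (-α) * 2 ^ α = (latticeNorm k / 2) ^ (-α) := by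
      rw [Real.div_rpow hN.le zero_le_two, Real.rpow_neg zero_le_two, div_inv_eq_mul]
    rw [if_pos ⟨hl.1, hlN⟩, if_neg fun h => (not_lt.mpr hlN) h.2, add_zero, mul_comm (2 ^ α),
      hpow]
    exact mul_le_mul_of_nonneg_right
      (Real.rpow_le_rpow_of_nonpos (by positivity) hm (neg_nonpos.mpr hα))
      (Real.rpow_nonneg (latticeNorm_nonneg _) _)
  · have hl0 : 0 < latticeNorm l := one_pos.trans_le (one_le_latticeNorm hl.1)
    rw [if_neg fun h => (not_le.mpr hlN) h.2, if_pos ⟨hl.1, hlN⟩, mul_zero, zero_add, neg_add,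
      Real.rpow_add hl0]
    exact mul_le_mul_of_nonneg_right
      (Real.rpow_le_rpow_of_nonpos hl0 hl.2 (neg_nonpos.mpr hα))
      (Real.rpow_nonneg hl0.le _)

lemma exists_sum_halfSummand_le (hd : 0 < d) {α γ β : ℝ} (hα : 0 ≤ α) (hγ : 0 ≤ γ)
    (hαγ : (d : ℝ) < α + γ) (hβα : β ≤ α) (hβ : β ≤ α + γ - d) :
    ∃ C, 0 < C ∧ ∀ k : Fin d → ℤ, k ≠ 0 → ∀ F : Finset (Fin d → ℤ),
      ∑ l ∈ F, halfSummand α γ k l ≤ C * (latticeNorm k ^ (-β) * (1 + log (latticeNorm k))) := by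
  obtain ⟨C₁, hC₁, hnear⟩ := exists_sum_latticeNorm_rpow_le hd hγ
  obtain ⟨C₂, hC₂, hfar⟩ := exists_sum_latticeNorm_rpow_gt_le hd hαγ
  refine ⟨2 ^ α * C₁ + C₂, by positivity, fun k hk F => ?_⟩
  set N := latticeNorm k
  have hN : 1 ≤ N := one_le_latticeNorm hk
  have hlog : 0 ≤ log N := Real.log_nonneg hN
  have hnear_exp : N ^ (-α) * N ^ max ((d : ℝ) - γ) 0 ≤ N ^ (-β) := by
    rw [← Real.rpow_add (by linarith)]
    have : max ((d : ℝ) - γ) 0 ≤ α - β := max_le (by linarith) (by linarith)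
    exact Real.rpow_le_rpow_of_exponent_le hN (by linarith)
  have hfar_exp : N ^ ((d : ℝ) - (α + γ)) ≤ N ^ (-β) * (1 + log N) :=
    (Real.rpow_le_rpow_of_exponent_le hN (by linarith)).trans
      (le_mul_of_one_le_right (by positivity) (by linarith))
  calc ∑ l ∈ F, halfSummand α γ k l
      ≤ ∑ l ∈ F, (2 ^ α * N ^ (-α) *
          (if l ≠ 0 ∧ latticeNorm l ≤ N then latticeNorm l ^ (-γ) else 0)
        + (if l ≠ 0 ∧ N < latticeNorm l then latticeNorm l ^ (-(α + γ)) else 0)) :=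
        sum_le_sum fun l _ => halfSummand_le hα γ hk l
    _ = 2 ^ α * N ^ (-α) *
          ∑ l ∈ F, (if l ≠ 0 ∧ latticeNorm l ≤ N then latticeNorm l ^ (-γ) else 0)
        + ∑ l ∈ F, (if l ≠ 0 ∧ N < latticeNorm l then latticeNorm l ^ (-(α + γ)) else 0) := by
        rw [sum_add_distrib, mul_sum]
    _ ≤ 2 ^ α * N ^ (-α) * (C₁ * N ^ max ((d : ℝ) - γ) 0 * (1 + log N))
        + C₂ * N ^ ((d : ℝ) - (α + γ)) := by
        gcongr
        exacts [hnear N hN F, hfar N (by linarith) F]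
    _ ≤ 2 ^ α * C₁ * (N ^ (-β) * (1 + log N)) + C₂ * (N ^ (-β) * (1 + log N)) := by
        rw [show 2 ^ α * N ^ (-α) * (C₁ * N ^ max ((d : ℝ) - γ) 0 * (1 + log N))
          = 2 ^ α * C₁ * ((N ^ (-α) * N ^ max ((d : ℝ) - γ) 0) * (1 + log N)) by ring]
        gcongr
    _ = (2 ^ α * C₁ + C₂) * (N ^ (-β) * (1 + log N)) := by ring

lemma rpow_neg_mul_one_add_log_le {β N : ℝ} (hβ : 0 ≤ β) (hN : 1 ≤ N) :
    N ^ (-β) * (1 + log N) ≤ 2 ^ β * (1 + 1 / log 2) * ((1 + N) ^ (-β) * log (1 + N)) := by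
  have hN0 : 0 < N := by linarith
  have hlog2 : 0 < log 2 := Real.log_pos one_lt_two
  have hpow : N ^ (-β) ≤ 2 ^ β * (1 + N) ^ (-β) := by
    calc N ^ (-β) = 2 ^ β * (2 * N) ^ (-β) := by
          rw [Real.mul_rpow zero_le_two hN0.le, ← mul_assoc, ← Real.rpow_add zero_lt_two,
            add_neg_cancel, Real.rpow_zero, one_mul]
      _ ≤ 2 ^ β * (1 + N) ^ (-β) := mul_le_mul_of_nonneg_left
          (Real.rpow_le_rpow_of_nonpos (by linarith) (by linarith) (neg_nonpos.mpr hβ))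
          (by positivity)
  have hlog : 1 + log N ≤ (1 + 1 / log 2) * log (1 + N) := by
    have h2 : log 2 ≤ log (1 + N) := Real.log_le_log zero_lt_two (by linarith)
    have hN' : log N ≤ log (1 + N) := Real.log_le_log hN0 (by linarith)
    have h1 : 1 ≤ log (1 + N) / log 2 := (one_le_div hlog2).mpr h2
    calc 1 + log N ≤ log (1 + N) / log 2 + log (1 + N) := add_le_add h1 hN'
      _ = (1 + 1 / log 2) * log (1 + N) := by ring
  calc N ^ (-β) * (1 + log N)
      ≤ (2 ^ β * (1 + N) ^ (-β)) * ((1 + 1 / log 2) * log (1 + N)) :=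
        mul_le_mul hpow hlog (by linarith [Real.log_nonneg hN]) (by positivity)
    _ = 2 ^ β * (1 + 1 / log 2) * ((1 + N) ^ (-β) * log (1 + N)) := by ring

theorem stmt1_general (d : ℕ) (hd : 0 < d) (α γ : ℝ) (hα : 0 < α) (hγ : 0 < γ)
    (hsum : (d : ℝ) < α + γ) :
    ∃ C : ℝ, 0 < C ∧ ∀ k : Fin d → ℤ, k ≠ 0 →
      (∑' l : Fin d → ℤ,
          if l ≠ 0 ∧ k - l ≠ 0 then
            1 / (latticeNorm (k - l) ^ α * latticeNorm l ^ γ)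
          else 0)
        ≤ C * (1 + latticeNorm k) ^ (-(min α (min γ (α + γ - d))))
            * Real.log (1 + latticeNorm k) := by
  set β := min α (min γ (α + γ - d))
  have hβα : β ≤ α := min_le_left _ _
  have hβγ : β ≤ γ := (min_le_right _ _).trans (min_le_left _ _)
  have hβ : β ≤ α + γ - d := (min_le_right _ _).trans (min_le_right _ _)
  have hβ0 : 0 ≤ β := le_min hα.le (le_min hγ.le (by linarith))
  obtain ⟨C₁, hC₁, h₁⟩ := exists_sum_halfSummand_le hd hα.le hγ.le hsum hβα hβ
  obtain ⟨C₂, hC₂, h₂⟩ := exists_sum_halfSummand_le hd hγ.le hα.le (by linarith) hβγ (by linarith)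
  refine ⟨(C₁ + C₂) * (2 ^ β * (1 + 1 / log 2)), by positivity, fun k hk => ?_⟩
  set N := latticeNorm k
  have hN : 1 ≤ N := one_le_latticeNorm hk
  have hbound : 0 ≤ N ^ (-β) * (1 + log N) :=
    mul_nonneg (by positivity) (by linarith [Real.log_nonneg hN])
  calc (∑' l, if l ≠ 0 ∧ k - l ≠ 0 then 1 / (latticeNorm (k - l) ^ α * latticeNorm l ^ γ) else 0)
      ≤ (C₁ + C₂) * (N ^ (-β) * (1 + log N)) := by
        refine tsum_le_of_sum_le' (mul_nonneg (by positivity) hbound) fun F => ?_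
        calc _ ≤ ∑ l ∈ F, (halfSummand α γ k l + halfSummand γ α k (k - l)) :=
              sum_le_sum fun l _ => ite_one_div_le_halfSummand_add α γ k l
          _ = ∑ l ∈ F, halfSummand α γ k l + ∑ m ∈ F.image (k - ·), halfSummand γ α k m := by
              rw [sum_add_distrib, sum_image fun _ _ _ _ h => sub_right_injective h]
          _ ≤ _ := by linarith [h₁ k hk F, h₂ k hk (F.image (k - ·))]
    _ ≤ (C₁ + C₂) * (2 ^ β * (1 + 1 / log 2) * ((1 + N) ^ (-β) * log (1 + N))) :=
        mul_le_mul_of_nonneg_left (rpow_neg_mul_one_add_log_le hβ0 hN) (by positivity)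
    _ = _ := by ring

/-- Lemma 2.2 (logarithmic case): for `α, γ > 0` with `α + γ > d` and `α = d` or `γ = d`,
there is `C < ∞` such that for every nonzero `k ∈ ℤ^d`,
`∑_{l+m=k, l≠0, m≠0} 1/(|m|^α |l|^γ) ≤ C (1+|k|)^{-β} log(1+|k|)`,
with `β = min{α, γ, α+γ-d}`. -/
theorem stmt1 (d : ℕ) (hd : 0 < d) (α γ : ℝ) (hα : 0 < α) (hγ : 0 < γ)
    (hsum : (d : ℝ) < α + γ) (hlog : α = (d : ℝ) ∨ γ = (d : ℝ)) :
    ∃ C : ℝ, 0 < C ∧ ∀ k : Fin d → ℤ, k ≠ 0 →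
      (∑' l : Fin d → ℤ,
          if l ≠ 0 ∧ k - l ≠ 0 then
            1 / (latticeNorm (k - l) ^ α * latticeNorm l ^ γ)
          else 0)
        ≤ C * (1 + latticeNorm k) ^ (-(min α (min γ (α + γ - d))))
            * Real.log (1 + latticeNorm k) :=
  stmt1_general d hd α γ hα hγ hsum
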